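/- Let G be a connected even graph and let 𝒞 be any cycle decomposition of G, with cycle intersection graph CI(G) a multigraph (not necessarily simple). Then for every spanning tree T of CI(G), ∇(G) ≤ (|E(CI(G))| − |V(CI(G))| + 1) + |MSF(T)|, where |E(CI(G))| counts one edge for each intersection vertex of each pair of distinct cycles of 𝒞. -/

import Mathlib

open SimpleGraph

variable {V : Type*}

/-- A graph is *even* if every vertex has even degree. -/
def IsEvenGraph (G : SimpleGraph V) : Prop :=
  ∀ v : V, Even (G.neighborSet v).ncard

/-- A subgraph is a *cycle* if it is connected and every one of its vertices has degree 2. -/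
def IsCycleSubgraph {G : SimpleGraph V} (H : G.Subgraph) : Prop :=
  H.Connected ∧ ∀ v ∈ H.verts, (H.neighborSet v).ncard = 2

/-- A *cycle decomposition* of `G` is a family of cycle subgraphs such that every edge of `G`
lies in exactly one of them. -/
def IsCycleDecomposition (G : SimpleGraph V) (𝒞 : Set G.Subgraph) : Prop :=
  (∀ C ∈ 𝒞, IsCycleSubgraph C) ∧ ∀ e ∈ G.edgeSet, ∃! C, C ∈ 𝒞 ∧ e ∈ SimpleGraph.Subgraph.edgeSet C

/-- The edges of the cycle intersection *multigraph* of a cycle decomposition `𝒞`: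
one edge joining `C` and `C'` for each pair of distinct cycles `C ≠ C'` of `𝒞` and each
vertex `v` lying on both (the edge is labelled by `v`). -/
def CIEdges (G : SimpleGraph V) (𝒞 : Set G.Subgraph) : Set (Sym2 G.Subgraph × V) :=
  {p | ∃ C ∈ 𝒞, ∃ C' ∈ 𝒞, ∃ v : V, C ≠ C' ∧
    v ∈ C.verts ∩ SimpleGraph.Subgraph.verts C' ∧ p = (s(C, C'), v)}

/-- The underlying simple graph of the cycle intersection graph of a cycle decomposition:
two distinct cycles are adjacent iff they share a vertex. -/
def CIGraph (G : SimpleGraph V) (𝒞 : Set G.Subgraph) : SimpleGraph 𝒞 where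
  Adj C D := C ≠ D ∧ ((C : G.Subgraph).verts ∩ (D : G.Subgraph).verts).Nonempty
  symm := ⟨by
    rintro C D ⟨h1, h2⟩
    exact ⟨h1.symm, by rwa [Set.inter_comm] at h2⟩⟩
  loopless := ⟨by rintro C ⟨h1, _⟩; exact h1 rfl⟩

/-- The cycle intersection graph is *simple* iff any two distinct cycles of the decomposition
intersect in at most one vertex. -/
def CISimple (G : SimpleGraph V) (𝒞 : Set G.Subgraph) : Prop :=
  ∀ C ∈ 𝒞, ∀ D ∈ 𝒞, C ≠ D →
    ((C : G.Subgraph).verts ∩ (D : G.Subgraph).verts).ncard ≤ 1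

/-- `S` is a decycling set of `G` iff `G - S` is acyclic. -/
def IsDecyclingSet (G : SimpleGraph V) (S : Set V) : Prop :=
  (G.induce Sᶜ).IsAcyclic

/-- The decycling number of `G`: the minimum size of a decycling set. -/
noncomputable def decyclingNumber (G : SimpleGraph V) : ℕ :=
  sInf {n | ∃ S : Set V, IsDecyclingSet G S ∧ S.ncard = n}

/-- The *size* of a spanning forest: its number of edges plus its number of isolated vertices. -/
noncomputable def forestSize {W : Type*} (F : SimpleGraph W) : ℕ :=
  F.edgeSet.ncard + {v : W | ∀ w, ¬ F.Adj v w}.ncard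

/-- The minimum size of a spanning forest of `H` (a spanning forest is an acyclic spanning
subgraph; note a subgraph `F ≤ H` on the same vertex type is automatically spanning). -/
noncomputable def MSF {W : Type*} (H : SimpleGraph W) : ℕ :=
  sInf {n | ∃ F ≤ H, F.IsAcyclic ∧ forestSize F = n}

/-!
Let `F` be a minimum spanning forest of `T` and, for every edge `cc'` of `T \ F`, pick a vertex
`χ(cc')` common to `c` and `c'`. Take for `S` one vertex of each cycle isolated in `F`, together
with every vertex lying on two or more cycles, except the vertices `χ(cc')` that lie on `c` and
`c'` only. Then every cycle of `𝒞` meets `S`, and outside `S` two cycles can only meet along an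
edge of `T`, in a single vertex. A cycle of `G - S` uses each cycle of `𝒞` along a proper part,
which spans fewer edges than vertices; since these parts are glued along the tree `T`, the
whole would span fewer edges than vertices as well, which is absurd. For the size of `S`: the
remaining junction vertices and the edges of `T \ F` inject into the edges of the cycle
intersection multigraph, and `|E(T)| - |E(F)| = |V(CI)| - 1 - |E(F)|`.
-/

open Finset

namespace SimpleGraph

theorem IsAcyclic.card_edges_lt_card_of_forall_mem {W : Type*} {T : SimpleGraph W}
    (hT : T.IsAcyclic) {U : Finset W} (hU : U.Nonempty) {E : Finset (Sym2 W)} (hE : ↑E ⊆ T.edgeSet)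
    (hEU : ∀ e ∈ E, ∀ x ∈ e, x ∈ U) : #E < #U := by
  classical
  have : Nonempty U := hU.to_subtype
  obtain ⟨F, hTF, -, hF⟩ := (connected_top (V := U)).exists_isTree_le_of_le_of_isAcyclic
    le_top (hT.induce U)
  rw [← Fintype.card_coe U, ← hF.card_edgeFinset]
  refine Nat.lt_succ_of_le (Finset.card_le_card_of_forall_subsingleton'
    (fun e' e => Sym2.map Subtype.val e' = e) (fun e he => ?_)
    fun e' _ a ha b hb => ha.2.symm.trans hb.2)
  induction e using Sym2.ind with
  | _ x y =>
    refine ⟨s(⟨x, hEU _ he x (by simp)⟩, ⟨y, hEU _ he y (by simp)⟩), ?_, by simp⟩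
    rw [mem_edgeFinset]
    exact hTF (hE he)

theorem isAcyclic_of_forall_card_lt {V : Type*} {H : SimpleGraph V}
    (h : ∀ (B : Finset (Sym2 V)) (X : Finset V), B.Nonempty → ↑B ⊆ H.edgeSet →
      (∀ e ∈ B, ∀ x ∈ e, x ∈ X) → #B < #X) : H.IsAcyclic := by
  classical
  intro u p hp
  have hB : #p.edges.toFinset = p.length := by
    rw [List.toFinset_card_of_nodup hp.edges_nodup, p.length_edges]
  refine (h p.edges.toFinset p.support.tail.toFinset ?_ ?_ ?_).not_ge ?_
  · rw [← Finset.card_pos, hB]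
    exact lt_of_lt_of_le (by norm_num) hp.three_le_length
  · intro e he
    exact p.edges_subset_edgeSet (List.mem_toFinset.1 he)
  · intro e he x hx
    rw [List.mem_toFinset] at he ⊢
    rcases p.mem_support_iff.1 (p.mem_support_of_mem_edges he hx) with rfl | h
    · exact p.end_mem_tail_support hp.not_nil
    · exact h
  · rw [hB]
    refine (List.toFinset_card_le _).trans ?_
    simp

end SimpleGraph

theorem IsCycleSubgraph.ncard_incidenceSet {G : SimpleGraph V} {C : G.Subgraph}
    (hC : IsCycleSubgraph C) {x : V} (hx : x ∈ C.verts) : (C.incidenceSet x).ncard = 2 := by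
  have himage : C.incidenceSet x = (s(x, ·)) '' C.neighborSet x := by
    ext e
    constructor
    · rintro ⟨he, hxe⟩
      obtain ⟨y, rfl⟩ := Sym2.mem_iff_exists.1 hxe
      exact ⟨y, he, rfl⟩
    · rintro ⟨y, hy, rfl⟩
      exact ⟨hy, Sym2.mem_mk_left x y⟩
  rw [himage, Set.ncard_image_of_injective _ fun y z h => Sym2.congr_right.1 h, hC.2 x hx]

theorem IsCycleSubgraph.card_edges_lt_card_of_notMem {G : SimpleGraph V} {C : G.Subgraph}
    (hC : IsCycleSubgraph C) {X : Finset V} (hXC : ↑X ⊆ C.verts) {s : V} (hs : s ∈ C.verts)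
    (hsX : s ∉ X) {A : Finset (Sym2 V)} (hA : A.Nonempty) (hAC : ↑A ⊆ C.edgeSet)
    (hAX : ∀ e ∈ A, ∀ x ∈ e, x ∈ X) : #A < #X := by
  classical
  by_contra! hXA
  have hinc : ∀ x, ↑(A.filter (x ∈ ·)) ⊆ C.incidenceSet x := fun x e he =>
    ⟨hAC (mem_filter.1 he).1, (mem_filter.1 he).2⟩
  have hfin : ∀ x ∈ X, (C.incidenceSet x).Finite := fun x hx =>
    Set.finite_of_ncard_ne_zero (by simp [hC.ncard_incidenceSet (hXC hx)])
  have hdeg : ∀ x ∈ X, #(A.filter (x ∈ ·)) ≤ 2 := fun x hx => by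
    rw [← Set.ncard_coe_finset, ← hC.ncard_incidenceSet (hXC hx)]
    exact Set.ncard_le_ncard (hinc x) (hfin x hx)
  have hsum : ∑ x ∈ X, #(A.filter (x ∈ ·)) = ∑ x ∈ X, 2 := by
    refine le_antisymm (sum_le_sum hdeg) ?_
    calc ∑ x ∈ X, 2 = 2 * #X := by rw [sum_const, smul_eq_mul, mul_comm]
      _ ≤ ∑ e ∈ A, 2 := by rw [sum_const, smul_eq_mul, mul_comm]; omega
      _ = ∑ e ∈ A, #(X.filter (· ∈ e)) := by
        refine sum_congr rfl fun e he => ?_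
        rw [← Sym2.card_toFinset_of_not_isDiag e (G.not_isDiag_of_mem_edgeSet
          (C.edgeSet_subset (hAC he)))]
        congr 1
        ext x
        simpa using fun hx => hAX e he x hx
      _ = ∑ x ∈ X, #(A.filter (x ∈ ·)) :=
        sum_card_bipartiteAbove_eq_sum_card_bipartiteBelow (s := A) (t := X) (fun e x => x ∈ e)
  have hclosed : ∀ x ∈ X, ∀ y, C.Adj x y → y ∈ X := by
    intro x hx y hxy
    have hall : ↑(A.filter (x ∈ ·)) = C.incidenceSet x :=
      Set.eq_of_subset_of_ncard_le (hinc x) (by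
        rw [Set.ncard_coe_finset, (sum_eq_sum_iff_of_le hdeg).1 hsum x hx,
          hC.ncard_incidenceSet (hXC hx)]) (hfin x hx)
    have : s(x, y) ∈ A.filter (x ∈ ·) := by
      rw [← Finset.mem_coe, hall]
      exact ⟨hxy, Sym2.mem_mk_left x y⟩
    exact hAX _ (mem_filter.1 this).1 y (Sym2.mem_mk_right x y)
  obtain ⟨e, he⟩ := hA
  obtain ⟨x, hxe⟩ : ∃ x, x ∈ e := ⟨_, Sym2.out_fst_mem e⟩
  obtain ⟨p⟩ := hC.1.preconnected ⟨x, C.mem_verts_of_mem_edge (hAC he) hxe⟩ ⟨s, hs⟩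
  suffices ∀ {u v : C.verts} (p : C.coe.Walk u v), (u : V) ∈ X → (v : V) ∈ X from
    hsX (this p (hAX e he x hxe))
  intro u v p
  induction p with
  | nil => exact id
  | cons h _ ih => exact fun hu => ih (hclosed _ hu _ h)

section Decycling

open scoped Classical

variable {G : SimpleGraph V} {𝒞 : Set G.Subgraph} {T : SimpleGraph 𝒞} {S : Set V}

theorem IsCycleDecomposition.sum_card_filter_mem_edgeSet (hdec : IsCycleDecomposition G 𝒞)
    {B : Finset (Sym2 V)} (hBG : ↑B ⊆ G.edgeSet) {U : Finset 𝒞}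
    (hU : ∀ e ∈ B, ∀ c : 𝒞, e ∈ c.1.edgeSet → c ∈ U) :
    ∑ c ∈ U, #(B.filter (· ∈ c.1.edgeSet)) = #B := by
  refine (sum_card_bipartiteAbove_eq_sum_card_bipartiteBelow (s := U) (t := B)
    (fun c e => e ∈ c.1.edgeSet)).trans ?_
  rw [card_eq_sum_ones]
  refine sum_congr rfl fun e he => card_eq_one.2 ?_
  obtain ⟨C, ⟨hC, heC⟩, huniq⟩ := hdec.2 e (hBG he)
  refine ⟨⟨C, hC⟩, eq_singleton_iff_unique_mem.2 ⟨mem_filter.2 ⟨hU e he _ heC, heC⟩, ?_⟩⟩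
  exact fun c hc => Subtype.ext (huniq c ⟨c.2, (mem_filter.1 hc).2⟩)

theorem card_filter_mem_verts_le_two (hT : T.IsAcyclic)
    (hadj : ∀ v ∉ S, ∀ c c' : 𝒞, c ≠ c' → v ∈ c.1.verts → v ∈ c'.1.verts → T.Adj c c')
    {x : V} (hx : x ∉ S) (U : Finset 𝒞) : #(U.filter fun c => x ∈ c.1.verts) ≤ 2 := by
  by_contra! h
  obtain ⟨a, ha, b, hb, c, hc, hab, hac, hbc⟩ := two_lt_card.1 h
  simp only [mem_filter] at ha hb hc
  exact hT.cliqueFree le_rfl {a, b, c} (is3Clique_triple_iff.2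
    ⟨hadj x hx a b hab ha.2 hb.2, hadj x hx a c hac ha.2 hc.2, hadj x hx b c hbc hb.2 hc.2⟩)

theorem card_filter_one_lt_lt_card (hT : T.IsAcyclic)
    (hadj : ∀ v ∉ S, ∀ c c' : 𝒞, c ≠ c' → v ∈ c.1.verts → v ∈ c'.1.verts → T.Adj c c')
    (hunique : ∀ e ∈ T.edgeSet, {v | v ∉ S ∧ ∀ c ∈ e, v ∈ c.1.verts}.Subsingleton)
    {U : Finset 𝒞} (hU : U.Nonempty) {X : Finset V} (hXS : ∀ x ∈ X, x ∉ S) :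
    #(X.filter fun x => 1 < #(U.filter fun c => x ∈ c.1.verts)) < #U := by
  refine lt_of_le_of_lt (card_le_card_of_forall_subsingleton
    (t := U.sym2.filter (· ∈ T.edgeSet)) (fun x e => ∀ c ∈ e, x ∈ c.1.verts) ?_ ?_)
    (hT.card_edges_lt_card_of_forall_mem hU (fun e he => (mem_filter.1 he).2)
      fun e he => mem_sym2_iff.1 (mem_filter.1 he).1)
  · intro x hx
    obtain ⟨hxX, hx⟩ := mem_filter.1 hx
    obtain ⟨c, hc, c', hc', hcc'⟩ := one_lt_card.1 hx
    simp only [mem_filter] at hc hc'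
    refine ⟨s(c, c'), mem_filter.2 ⟨mk_mem_sym2_iff.2 ⟨hc.1, hc'.1⟩,
      hadj x (hXS x hxX) c c' hcc' hc.2 hc'.2⟩, ?_⟩
    simp [hc.2, hc'.2]
  · intro e he x hx y hy
    exact hunique e (mem_filter.1 he).2 ⟨hXS x (mem_filter.1 hx.1).1, hx.2⟩
      ⟨hXS y (mem_filter.1 hy.1).1, hy.2⟩

theorem IsCycleDecomposition.card_edges_lt_card [Finite V] (hdec : IsCycleDecomposition G 𝒞)
    (hT : T.IsAcyclic) (hmeet : ∀ c : 𝒞, ∃ s ∈ c.1.verts, s ∈ S)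
    (hadj : ∀ v ∉ S, ∀ c c' : 𝒞, c ≠ c' → v ∈ c.1.verts → v ∈ c'.1.verts → T.Adj c c')
    (hunique : ∀ e ∈ T.edgeSet, {v | v ∉ S ∧ ∀ c ∈ e, v ∈ c.1.verts}.Subsingleton)
    {B : Finset (Sym2 V)} (hB : B.Nonempty) (hBG : ↑B ⊆ G.edgeSet) {X : Finset V}
    (hBX : ∀ e ∈ B, ∀ x ∈ e, x ∈ X) (hXS : ∀ x ∈ X, x ∉ S) : #B < #X := by
  have := Fintype.ofFinite 𝒞
  set U := univ.filter fun c : 𝒞 => ∃ e ∈ B, e ∈ c.1.edgeSet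
  have hU : U.Nonempty := by
    obtain ⟨e, he⟩ := hB
    obtain ⟨C, ⟨hC, heC⟩, -⟩ := hdec.2 e (hBG he)
    exact ⟨⟨C, hC⟩, mem_filter.2 ⟨mem_univ _, e, he, heC⟩⟩
  have hforest : ∀ c ∈ U, #(B.filter (· ∈ c.1.edgeSet)) + 1 ≤ #(X.filter (· ∈ c.1.verts)) := by
    intro c hc
    obtain ⟨e, he, hec⟩ := (mem_filter.1 hc).2
    obtain ⟨s, hs, hsS⟩ := hmeet c
    refine (hdec.1 c c.2).card_edges_lt_card_of_notMem (fun x hx => (mem_filter.1 hx).2) hs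
      (fun h => hXS s (mem_filter.1 h).1 hsS) ⟨e, mem_filter.2 ⟨he, hec⟩⟩
      (fun e he => (mem_filter.1 he).2) fun e he x hx => mem_filter.2
        ⟨hBX e (mem_filter.1 he).1 x hx, c.1.mem_verts_of_mem_edge (mem_filter.1 he).2 hx⟩
  have hmult : ∑ x ∈ X, #(U.filter fun c => x ∈ c.1.verts) ≤
      #X + #(X.filter fun x => 1 < #(U.filter fun c => x ∈ c.1.verts)) := by
    rw [card_filter, card_eq_sum_ones, ← sum_add_distrib]
    refine sum_le_sum fun x hx => ?_
    have := card_filter_mem_verts_le_two hT hadj (hXS x hx) U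
    split_ifs <;> omega
  suffices #B + #U < #X + #U by omega
  calc #B + #U = ∑ c ∈ U, (#(B.filter (· ∈ c.1.edgeSet)) + 1) := by
        rw [sum_add_distrib, hdec.sum_card_filter_mem_edgeSet hBG fun e he c hc =>
          mem_filter.2 ⟨mem_univ _, e, he, hc⟩, card_eq_sum_ones U]
    _ ≤ ∑ c ∈ U, #(X.filter (· ∈ c.1.verts)) := sum_le_sum hforest
    _ = ∑ x ∈ X, #(U.filter fun c => x ∈ c.1.verts) :=
        sum_card_bipartiteAbove_eq_sum_card_bipartiteBelow (s := U) (t := X)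
          fun (c : 𝒞) (x : V) => x ∈ c.1.verts
    _ < #X + #U := by
        have := card_filter_one_lt_lt_card hT hadj hunique hU hXS
        omega

theorem IsCycleDecomposition.isDecyclingSet [Finite V] (hdec : IsCycleDecomposition G 𝒞)
    (hT : T.IsAcyclic) (hmeet : ∀ c : 𝒞, ∃ s ∈ c.1.verts, s ∈ S)
    (hadj : ∀ v ∉ S, ∀ c c' : 𝒞, c ≠ c' → v ∈ c.1.verts → v ∈ c'.1.verts → T.Adj c c')
    (hunique : ∀ e ∈ T.edgeSet, {v | v ∉ S ∧ ∀ c ∈ e, v ∈ c.1.verts}.Subsingleton) :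
    IsDecyclingSet G S := by
  refine isAcyclic_of_forall_card_lt fun B X hB hBG hBX => ?_
  rw [← card_image_of_injective B (Sym2.map.injective Subtype.val_injective),
    ← card_image_of_injective X Subtype.val_injective]
  refine hdec.card_edges_lt_card hT hmeet hadj hunique (hB.image _) ?_ ?_ ?_
  · intro e he
    obtain ⟨e', he', rfl⟩ := mem_image.1 he
    induction e' using Sym2.ind with
    | _ x y => exact hBG he'
  · intro e he x hx
    obtain ⟨e', he', rfl⟩ := mem_image.1 he
    obtain ⟨x', hx', rfl⟩ := Sym2.mem_map.1 hx
    exact mem_image_of_mem _ (hBX e' he' x' hx')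
  · intro x hx
    obtain ⟨x', -, rfl⟩ := mem_image.1 hx
    exact x'.2

end Decycling

section Construction

variable {G : SimpleGraph V} {𝒞 : Set G.Subgraph}

def junctionVerts (𝒞 : Set G.Subgraph) : Set V :=
  {v | ∃ c c' : 𝒞, c ≠ c' ∧ v ∈ c.1.verts ∧ v ∈ c'.1.verts}

theorem ncard_junctionVerts_diff_add_ncard_edgeSet_le [Finite V] {H : SimpleGraph 𝒞}
    (hH : H.CliqueFree 3) (χ : Sym2 𝒞 → V) (hχ : ∀ e ∈ H.edgeSet, ∀ c ∈ e, χ e ∈ c.1.verts)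
    {K : Set V} (hK : ∀ e ∈ H.edgeSet, (∀ c : 𝒞, χ e ∈ c.1.verts ↔ c ∈ e) → χ e ∈ K) :
    (junctionVerts 𝒞 \ K).ncard + H.edgeSet.ncard ≤ (CIEdges G 𝒞).ncard := by
  classical
  set Φ : Sym2 𝒞 → Sym2 G.Subgraph × V := fun e => (e.map Subtype.val, χ e)
  have hΦ : Φ '' H.edgeSet ⊆ CIEdges G 𝒞 := by
    rintro _ ⟨e, he, rfl⟩
    induction e using Sym2.ind with
    | _ c c' => exact ⟨c, c.2, c', c'.2, χ s(c, c'), fun h => (H.ne_of_adj he) (Subtype.ext h),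
        ⟨hχ _ he c (Sym2.mem_mk_left c c'), hχ _ he c' (Sym2.mem_mk_right c c')⟩, rfl⟩
  have hΦinj : Φ.Injective := fun e e' h => Sym2.map.injective Subtype.val_injective
    (Prod.mk.inj h).1
  suffices junctionVerts 𝒞 \ K ⊆ Prod.snd '' (CIEdges G 𝒞 \ Φ '' H.edgeSet) by
    have h1 := (Set.ncard_le_ncard this).trans (Set.ncard_image_le (Set.toFinite _))
    have h2 := Set.ncard_sdiff_add_ncard_of_subset hΦ
    rw [Set.ncard_image_of_injective _ hΦinj] at h2
    omega
  rintro v ⟨⟨c, c', hcc', hvc, hvc'⟩, hvK⟩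
  -- Otherwise every intersection edge labelled `v` is some `Φ e`; as `H` has no triangle, `v` then
  -- lies on `c` and `c'` only, and `χ s(c, c') = v` would put `v` in `K`.
  by_contra! hall
  have hpair : ∀ d d' : 𝒞, d ≠ d' → v ∈ d.1.verts → v ∈ d'.1.verts →
      H.Adj d d' ∧ χ s(d, d') = v := by
    intro d d' hdd' hvd hvd'
    by_contra hnot
    refine hall ⟨(s(d.1, d'.1), v),
      ⟨⟨d, d.2, d', d'.2, v, fun h => hdd' (Subtype.ext h), ⟨hvd, hvd'⟩, rfl⟩, ?_⟩, rfl⟩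
    rintro ⟨e, he, heq⟩
    obtain rfl : e = s(d, d') := Sym2.map.injective Subtype.val_injective
      ((Prod.mk.inj heq).1.trans (Sym2.map_mk _ _ _).symm)
    exact hnot ⟨he, (Prod.mk.inj heq).2⟩
  obtain ⟨hadj, hχv⟩ := hpair c c' hcc' hvc hvc'
  refine hvK (hχv ▸ hK _ hadj fun d => ⟨fun hvd => ?_, fun hd => ?_⟩)
  · by_contra hd
    simp only [Sym2.mem_iff, not_or] at hd
    exact hH {c, c', d} (is3Clique_triple_iff.2 ⟨hadj, (hpair c d (Ne.symm hd.1) hvc (hχv ▸ hvd)).1,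
      (hpair c' d (Ne.symm hd.2) hvc' (hχv ▸ hvd)).1⟩)
  · rw [hχv]
    rcases Sym2.mem_iff.1 hd with rfl | rfl
    exacts [hvc, hvc']

theorem IsCycleDecomposition.exists_isDecyclingSet_ncard_add_le [Finite V]
    (hdec : IsCycleDecomposition G 𝒞) {T F : SimpleGraph 𝒞} (hT : T.IsAcyclic)
    (hTCI : T ≤ CIGraph G 𝒞) (hFT : F ≤ T) :
    ∃ S, IsDecyclingSet G S ∧
      S.ncard + (T \ F).edgeSet.ncard ≤ (CIEdges G 𝒞).ncard + {c | ∀ c', ¬F.Adj c c'}.ncard := by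
  have hcommon : ∀ e : Sym2 𝒞, ∃ v : V, e ∈ T.edgeSet → ∀ c ∈ e, v ∈ c.1.verts := by
    refine Sym2.ind fun c c' => ?_
    by_cases he : T.Adj c c'
    · obtain ⟨v, hv, hv'⟩ := (hTCI he).2
      exact ⟨v, fun _ d hd => by rcases Sym2.mem_iff.1 hd with rfl | rfl <;> assumption⟩
    · obtain ⟨v, -⟩ := (hdec.1 c c.2).1.nonempty
      exact ⟨v, fun h => absurd h he⟩
  choose χ hχ using hcommon
  choose x hx using fun c : 𝒞 => (hdec.1 c c.2).1.nonempty
  set K := {v | ∃ e ∈ (T \ F).edgeSet, χ e = v ∧ ∀ c : 𝒞, v ∈ c.1.verts ↔ c ∈ e}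
  set I := {c | ∀ c', ¬F.Adj c c'}
  refine ⟨(junctionVerts 𝒞 \ K) ∪ x '' I, ?_, ?_⟩
  · have hkey : ∀ v ∉ (junctionVerts 𝒞 \ K) ∪ x '' I, ∀ c c' : 𝒞, c ≠ c' →
        v ∈ c.1.verts → v ∈ c'.1.verts → s(c, c') ∈ (T \ F).edgeSet ∧ χ s(c, c') = v := by
      intro v hvS c c' hcc' hvc hvc'
      by_contra hnot
      refine hvS (Or.inl ⟨⟨c, c', hcc', hvc, hvc'⟩, ?_⟩)
      rintro ⟨e, he, rfl, hpriv⟩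
      obtain rfl := (Sym2.mem_and_mem_iff hcc').1 ⟨(hpriv c).1 hvc, (hpriv c').1 hvc'⟩
      exact hnot ⟨he, rfl⟩
    refine hdec.isDecyclingSet hT (fun c => ?_) (fun v hv c c' hcc' hvc hvc' => ?_) ?_
    · by_cases hc : c ∈ I
      · exact ⟨x c, hx c, Or.inr ⟨c, hc, rfl⟩⟩
      · obtain ⟨c', hcc'⟩ : ∃ c', F.Adj c c' := by simpa [I] using hc
        obtain ⟨v, hvc, hvc'⟩ := (hTCI (hFT hcc')).2
        refine ⟨v, hvc, by_contra fun hv => ?_⟩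
        exact ((hkey v hv c c' hcc'.ne hvc hvc').1.2 hcc')
    · exact (hkey v hv c c' hcc' hvc hvc').1.1
    · refine Sym2.ind fun c c' he v ⟨hv, hvcc'⟩ w ⟨hw, hwcc'⟩ => ?_
      have hcc' : c ≠ c' := T.ne_of_adj he
      rw [← (hkey v hv c c' hcc' (hvcc' c (by simp)) (hvcc' c' (by simp))).2,
        ← (hkey w hw c c' hcc' (hwcc' c (by simp)) (hwcc' c' (by simp))).2]
  · have hjunction := ncard_junctionVerts_diff_add_ncard_edgeSet_le (K := K)
      ((hT.anti sdiff_le).cliqueFree le_rfl) χ (fun e he => hχ e (edgeSet_mono sdiff_le he))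
      fun e he hpriv => ⟨e, he, rfl, hpriv⟩
    have hunion := Set.ncard_union_le (junctionVerts 𝒞 \ K) (x '' I)
    have himage := Set.ncard_image_le (f := x) (s := I) (Set.toFinite _)
    omega

end Construction

theorem exists_forestSize_eq_MSF {W : Type*} (H : SimpleGraph W) :
    ∃ F ≤ H, F.IsAcyclic ∧ forestSize F = MSF H :=
  Nat.sInf_mem (s := {n | ∃ F ≤ H, F.IsAcyclic ∧ forestSize F = n})
    ⟨_, ⊥, bot_le, isAcyclic_bot, rfl⟩

theorem decyclingNumber_le_cycleRank_add_MSF_general [Fintype V]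
    (G : SimpleGraph V) (𝒞 : Set G.Subgraph) (hdec : IsCycleDecomposition G 𝒞) :
    ∀ T : SimpleGraph 𝒞, T ≤ CIGraph G 𝒞 → T.IsTree →
      decyclingNumber G ≤
        ((CIEdges G 𝒞).ncard + 1 - Nat.card 𝒞) + MSF T := by
  intro T hTCI hT
  obtain ⟨F, hFT, -, hF⟩ := exists_forestSize_eq_MSF T
  obtain ⟨S, hS, hcard⟩ := hdec.exists_isDecyclingSet_ncard_add_le hT.isAcyclic hTCI hFT
  have hdecycling : decyclingNumber G ≤ S.ncard := Nat.sInf_le ⟨S, hS, rfl⟩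
  have hedges : T.edgeSet.ncard + 1 = Nat.card 𝒞 := by
    rw [← Nat.card_coe_set_eq]
    exact (isTree_iff_connected_and_card.1 hT).2
  have hsplit : (T \ F).edgeSet.ncard + F.edgeSet.ncard = T.edgeSet.ncard := by
    rw [edgeSet_sdiff]
    exact Set.ncard_sdiff_add_ncard_of_subset (edgeSet_mono hFT)
  rw [← hF, forestSize]
  omega

/-- Let `G` be a connected even graph and `𝒞` any cycle decomposition of
`G`, with cycle intersection multigraph `CI(G)` (not necessarily simple); `|E(CI(G))|`
counts one edge for each intersection vertex of each pair of distinct cycles.  Then for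
every spanning tree `T` of `CI(G)` (equivalently, of its underlying simple graph),
`∇(G) ≤ (|E(CI(G))| − |V(CI(G))| + 1) + |MSF(T)|`.
(The cycle rank is written `|E| + 1 - |V|` to avoid truncated subtraction.) -/
theorem decyclingNumber_le_cycleRank_add_MSF [Fintype V]
    (G : SimpleGraph V) (hconn : G.Connected) (heven : IsEvenGraph G)
    (𝒞 : Set G.Subgraph) (hdec : IsCycleDecomposition G 𝒞) :
    ∀ T : SimpleGraph 𝒞, T ≤ CIGraph G 𝒞 → T.IsTree →
      decyclingNumber G ≤
        ((CIEdges G 𝒞).ncard + 1 - Nat.card 𝒞) + MSF T :=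
  decyclingNumber_le_cycleRank_add_MSF_general G 𝒞 hdec
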